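/- Let α ∈ (0, 1), p ∈ [1, ∞) and T > 0. Let ℓ : ℝ^d → [0, ∞) be bounded and α-Hölder continuous (i.e. ℓ ∈ C^α_b(ℝ^d)) and assume K := ∫_{ℝ^d} (1 + |x|^p) · √(ℓ(x)) dx < ∞. There exists a constant c > 0 (depending only on d, T, α, p, ‖ℓ‖_{C^α_b} and K) such that for all 0 ≤ s < t ≤ T (with the convention P_0 ℓ := ℓ): ∫_{ℝ^d} (1 + |x|^p) · |P_t ℓ(x) − P_s ℓ(x)| dx ≤ c · (t − s)^(α/4). -/

import Mathlib

open Real MeasureTheory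

/-- The Gaussian heat kernel `p_t(x) = (4πt)^(-d/2) exp(-|x|²/(4t))`. -/
noncomputable def heatKernel (d : ℕ) (t : ℝ) (x : EuclideanSpace ℝ (Fin d)) : ℝ :=
  (4 * Real.pi * t) ^ (-(d : ℝ) / 2) * Real.exp (-‖x‖ ^ 2 / (4 * t))

/-- The heat semigroup `P_t f (x) = ∫ p_t(x - y) f(y) dy` for `t > 0`,
with the convention `P_0 f := f`. -/
noncomputable def heatSemigroup (d : ℕ) (t : ℝ) (f : EuclideanSpace ℝ (Fin d) → ℝ)
    (x : EuclideanSpace ℝ (Fin d)) : ℝ :=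
  if t = 0 then f x else ∫ y : EuclideanSpace ℝ (Fin d), heatKernel d t (x - y) * f y

/-!
Writing `P_s ℓ (x) = ∫ p_1(v) ℓ(x - √s v) dv`, the difference `P_t ℓ - P_s ℓ` is an average over
`v` of differences of two translates of `ℓ` whose shifts are `(√t - √s) |v| ≤ √(t - s) |v|` apart.
Interpolating the Hölder bound with `|ℓ a - ℓ b| ≤ ℓ a + ℓ b` gives
`|ℓ a - ℓ b| ≤ √L |a - b|^(α/2) (√(ℓ a) + √(ℓ b))`, so the weighted `L¹` norm of each difference is
at most `(t - s)^(α/4) |v|^(α/2)` times weighted `L¹` norms of translates of `√ℓ`. Peetre's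
inequality `1 + |x + y|^p ≤ 2^p (1 + |x|^p) (1 + |y|^p)` bounds these by `K` times a polynomial in
`|v|`, which is integrable against the Gaussian. The estimates are carried out for lower Lebesgue
integrals, so the intermediate functions need not be shown to be integrable.
-/

open scoped ENNReal

lemma add_rpow_le_two_rpow_mul_add {a b p : ℝ} (ha : 0 ≤ a) (hb : 0 ≤ b) (hp : 0 ≤ p) :
    (a + b) ^ p ≤ 2 ^ p * (a ^ p + b ^ p) := by
  wlog hab : a ≤ b generalizing a b
  · rw [add_comm a, add_comm (a ^ p)]
    exact this hb ha (le_of_not_ge hab)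
  calc (a + b) ^ p ≤ (2 * b) ^ p := by gcongr; linarith
    _ = 2 ^ p * b ^ p := mul_rpow (by norm_num) hb
    _ ≤ 2 ^ p * (a ^ p + b ^ p) := by gcongr; exact le_add_of_nonneg_left (rpow_nonneg ha p)

lemma one_add_norm_add_rpow_le {E : Type*} [SeminormedAddCommGroup E] {p : ℝ} (hp : 0 ≤ p)
    (x y : E) : 1 + ‖x + y‖ ^ p ≤ 2 ^ p * (1 + ‖x‖ ^ p) * (1 + ‖y‖ ^ p) := by
  have h2p : 1 ≤ (2 : ℝ) ^ p := one_le_rpow (by norm_num) hp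
  have hx := rpow_nonneg (norm_nonneg x) p
  have hy := rpow_nonneg (norm_nonneg y) p
  have hxy : ‖x + y‖ ^ p ≤ 2 ^ p * (‖x‖ ^ p + ‖y‖ ^ p) :=
    (rpow_le_rpow (norm_nonneg _) (norm_add_le x y) hp).trans
      (add_rpow_le_two_rpow_mul_add (norm_nonneg x) (norm_nonneg y) hp)
  nlinarith [mul_nonneg (mul_nonneg (zero_le_one.trans h2p) hx) hy]

lemma abs_sub_le_sqrt_mul_sqrt_add_sqrt {a b M : ℝ} (ha : 0 ≤ a) (hb : 0 ≤ b)
    (hM : |a - b| ≤ M) : |a - b| ≤ √M * (√a + √b) := by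
  have hsum : 0 ≤ √a + √b := by positivity
  have hfac : |a - b| = |√a - √b| * (√a + √b) := by
    rw [← abs_of_nonneg hsum, ← abs_mul]
    congr 1
    linear_combination (sq_sqrt hb) - (sq_sqrt ha)
  have hdiff : |√a - √b| ≤ √a + √b := (abs_sub _ _).trans (by simp [abs_of_nonneg])
  have hsq : (√a - √b) ^ 2 ≤ M := by
    rw [← sq_abs]
    nlinarith [abs_nonneg (√a - √b)]
  rw [hfac]
  gcongr
  exact abs_le_sqrt hsq

lemma sqrt_rpow_eq_rpow_div_two {x : ℝ} (hx : 0 ≤ x) (a : ℝ) : √(x ^ a) = x ^ (a / 2) := by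
  rw [sqrt_eq_rpow, ← rpow_mul hx, mul_one_div]

lemma sqrt_sub_sqrt_le_sqrt_sub {s t : ℝ} (hs : 0 ≤ s) (hst : s ≤ t) : √t - √s ≤ √(t - s) := by
  rw [sub_le_iff_le_add, sqrt_le_left (by positivity)]
  nlinarith [sq_sqrt hs, sq_sqrt (sub_nonneg.2 hst),
    mul_nonneg (sqrt_nonneg (t - s)) (sqrt_nonneg s)]

lemma norm_sqrt_smul_sub_sqrt_smul_le {E : Type*} [SeminormedAddCommGroup E] [NormedSpace ℝ E]
    {s t : ℝ} (hs : 0 ≤ s) (hst : s ≤ t) (v : E) : ‖√t • v - √s • v‖ ≤ √(t - s) * ‖v‖ := by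
  rw [← sub_smul, norm_smul, norm_of_nonneg (sub_nonneg.2 (sqrt_le_sqrt hst))]
  gcongr
  exact sqrt_sub_sqrt_le_sqrt_sub hs hst

lemma lintegral_one_add_norm_rpow_mul_comp_sub_le {E : Type*} [NormedAddCommGroup E]
    [MeasurableSpace E] [MeasurableAdd E] (μ : Measure E) [μ.IsAddRightInvariant] {p : ℝ}
    (hp : 0 ≤ p) (g : E → ℝ≥0∞) (u : E) :
    ∫⁻ x, ENNReal.ofReal (1 + ‖x‖ ^ p) * g (x - u) ∂μ ≤
      ENNReal.ofReal (2 ^ p * (1 + ‖u‖ ^ p)) * ∫⁻ x, ENNReal.ofReal (1 + ‖x‖ ^ p) * g x ∂μ := by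
  calc ∫⁻ x, ENNReal.ofReal (1 + ‖x‖ ^ p) * g (x - u) ∂μ
      ≤ ∫⁻ x, ENNReal.ofReal (2 ^ p * (1 + ‖u‖ ^ p)) *
          (ENNReal.ofReal (1 + ‖x - u‖ ^ p) * g (x - u)) ∂μ := by
        refine lintegral_mono fun x => ?_
        rw [← mul_assoc, ← ENNReal.ofReal_mul (by positivity)]
        gcongr
        simpa [mul_right_comm] using one_add_norm_add_rpow_le hp (x - u) u
    _ = ENNReal.ofReal (2 ^ p * (1 + ‖u‖ ^ p)) * ∫⁻ x, ENNReal.ofReal (1 + ‖x‖ ^ p) * g x ∂μ := by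
        rw [lintegral_const_mul' _ _ ENNReal.ofReal_ne_top,
          lintegral_sub_right_eq_self (fun x => ENNReal.ofReal (1 + ‖x‖ ^ p) * g x) u]

lemma lintegral_one_add_norm_rpow_mul_enorm_comp_sub_sub_le {E : Type*} [NormedAddCommGroup E]
    [MeasurableSpace E] [BorelSpace E] (μ : Measure E) [μ.IsAddRightInvariant] {p α L : ℝ}
    (hp : 0 ≤ p) {ℓ : E → ℝ} (hℓm : Measurable ℓ) (hℓnn : ∀ x, 0 ≤ ℓ x)
    (hℓ : ∀ x y, |ℓ x - ℓ y| ≤ L * ‖x - y‖ ^ α) (a b : E) :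
    ∫⁻ x, ENNReal.ofReal (1 + ‖x‖ ^ p) * ‖ℓ (x - a) - ℓ (x - b)‖ₑ ∂μ ≤
      ENNReal.ofReal (√L * ‖a - b‖ ^ (α / 2) * (2 ^ p * (1 + ‖a‖ ^ p) + 2 ^ p * (1 + ‖b‖ ^ p))) *
        ∫⁻ x, ENNReal.ofReal (1 + ‖x‖ ^ p) * ENNReal.ofReal √(ℓ x) ∂μ := by
  set c := √L * ‖a - b‖ ^ (α / 2)
  set K := ∫⁻ x, ENNReal.ofReal (1 + ‖x‖ ^ p) * ENNReal.ofReal √(ℓ x) ∂μ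
  have hpt (x : E) : ‖ℓ (x - a) - ℓ (x - b)‖ₑ ≤
      ENNReal.ofReal c * (ENNReal.ofReal √(ℓ (x - a)) + ENNReal.ofReal √(ℓ (x - b))) := by
    have hc : c = √(L * ‖a - b‖ ^ α) := by
      rw [sqrt_mul' _ (rpow_nonneg (norm_nonneg _) _), sqrt_rpow_eq_rpow_div_two (norm_nonneg _)]
    rw [Real.enorm_eq_ofReal_abs, ← ENNReal.ofReal_add (sqrt_nonneg _) (sqrt_nonneg _),
      ← ENNReal.ofReal_mul (by positivity), hc]
    refine ENNReal.ofReal_le_ofReal (abs_sub_le_sqrt_mul_sqrt_add_sqrt (hℓnn _) (hℓnn _) ?_)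
    simpa [norm_sub_rev a b] using hℓ (x - a) (x - b)
  calc ∫⁻ x, ENNReal.ofReal (1 + ‖x‖ ^ p) * ‖ℓ (x - a) - ℓ (x - b)‖ₑ ∂μ
      ≤ ∫⁻ x, ENNReal.ofReal c *
          (ENNReal.ofReal (1 + ‖x‖ ^ p) * ENNReal.ofReal √(ℓ (x - a)) +
            ENNReal.ofReal (1 + ‖x‖ ^ p) * ENNReal.ofReal √(ℓ (x - b))) ∂μ := by
        refine lintegral_mono fun x => ?_
        grw [hpt x]
        exact (mul_left_comm _ _ _).trans_le (by rw [mul_add])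
    _ = ENNReal.ofReal c *
          (∫⁻ x, ENNReal.ofReal (1 + ‖x‖ ^ p) * ENNReal.ofReal √(ℓ (x - a)) ∂μ +
            ∫⁻ x, ENNReal.ofReal (1 + ‖x‖ ^ p) * ENNReal.ofReal √(ℓ (x - b)) ∂μ) := by
        rw [lintegral_const_mul' _ _ ENNReal.ofReal_ne_top, lintegral_add_left (by fun_prop)]
    _ ≤ ENNReal.ofReal c *
          (ENNReal.ofReal (2 ^ p * (1 + ‖a‖ ^ p)) * K +
            ENNReal.ofReal (2 ^ p * (1 + ‖b‖ ^ p)) * K) := by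
        gcongr <;>
          exact lintegral_one_add_norm_rpow_mul_comp_sub_le μ hp (fun y => ENNReal.ofReal √(ℓ y)) _
    _ = ENNReal.ofReal (c * (2 ^ p * (1 + ‖a‖ ^ p) + 2 ^ p * (1 + ‖b‖ ^ p))) * K := by
        rw [ENNReal.ofReal_mul (show 0 ≤ c by positivity),
          ENNReal.ofReal_add (by positivity) (by positivity),
          ← add_mul, mul_assoc]

lemma integrable_exp_neg_mul_sq_norm {V : Type*} [NormedAddCommGroup V] [InnerProductSpace ℝ V]
    [FiniteDimensional ℝ V] [MeasurableSpace V] [BorelSpace V] {b : ℝ} (hb : 0 < b) :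
    Integrable (fun v : V => exp (-b * ‖v‖ ^ 2)) :=
  .of_integral_ne_zero (by rw [GaussianFourier.integral_rexp_neg_mul_sq_norm hb]; positivity)

lemma integrable_rpow_norm_mul_exp_neg_mul_sq_norm {V : Type*} [NormedAddCommGroup V]
    [InnerProductSpace ℝ V] [FiniteDimensional ℝ V] [MeasurableSpace V] [BorelSpace V]
    {b q : ℝ} (hb : 0 < b) (hq : 0 ≤ q) :
    Integrable (fun v : V => ‖v‖ ^ q * exp (-b * ‖v‖ ^ 2)) := by
  have h := ProbabilityTheory.integrable_rpow_abs_mul_exp_of_integrable_exp_mul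
    (X := fun v : V => ‖v‖ ^ 2) (v := -b) (t := b / 2) (by positivity)
    (by simpa only [show -b + b / 2 = -(b / 2) by ring] using
      integrable_exp_neg_mul_sq_norm (V := V) (b := b / 2) (by positivity))
    (by simpa only [show -b - b / 2 = -(3 * b / 2) by ring] using
      integrable_exp_neg_mul_sq_norm (V := V) (b := 3 * b / 2) (by positivity))
    (p := q / 2) (by positivity)
  refine h.congr (.of_forall fun v => ?_)
  dsimp only
  rw [abs_of_nonneg (by positivity), ← rpow_natCast, ← rpow_mul (norm_nonneg v), Nat.cast_ofNat,
    mul_div_cancel₀ _ two_ne_zero]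

lemma heatKernel_eq_mul_exp (d : ℕ) (t : ℝ) (v : EuclideanSpace ℝ (Fin d)) :
    heatKernel d t v = (4 * π * t) ^ (-(d : ℝ) / 2) * exp (-(4 * t)⁻¹ * ‖v‖ ^ 2) := by
  rw [heatKernel]
  congr 2
  ring

lemma heatKernel_nonneg (d : ℕ) {t : ℝ} (ht : 0 ≤ t) (v : EuclideanSpace ℝ (Fin d)) :
    0 ≤ heatKernel d t v := by
  unfold heatKernel
  positivity

lemma continuous_heatKernel (d : ℕ) (t : ℝ) : Continuous (heatKernel d t) := by
  unfold heatKernel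
  fun_prop

lemma integral_heatKernel (d : ℕ) {t : ℝ} (ht : 0 < t) :
    ∫ v, heatKernel d t v = 1 := by
  rw [funext (heatKernel_eq_mul_exp d t), integral_const_mul,
    GaussianFourier.integral_rexp_neg_mul_sq_norm (by positivity), finrank_euclideanSpace_fin,
    show π / (4 * t)⁻¹ = 4 * π * t by rw [div_inv_eq_mul]; ring, neg_div,
    rpow_neg (by positivity), inv_mul_cancel₀ (by positivity)]

lemma integrable_heatKernel (d : ℕ) {t : ℝ} (ht : 0 < t) : Integrable (heatKernel d t) :=
  .of_integral_ne_zero (by rw [integral_heatKernel d ht]; exact one_ne_zero)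

lemma integrable_rpow_norm_mul_heatKernel (d : ℕ) {t q : ℝ} (ht : 0 < t) (hq : 0 ≤ q) :
    Integrable (fun v => ‖v‖ ^ q * heatKernel d t v) := by
  have h (v : EuclideanSpace ℝ (Fin d)) : ‖v‖ ^ q * heatKernel d t v =
      (4 * π * t) ^ (-(d : ℝ) / 2) * (‖v‖ ^ q * exp (-(4 * t)⁻¹ * ‖v‖ ^ 2)) := by
    rw [heatKernel_eq_mul_exp]
    ring
  simp_rw [h]
  exact (integrable_rpow_norm_mul_exp_neg_mul_sq_norm (by positivity) hq).const_mul _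

lemma integrable_heatKernel_mul_rpow_norm_mul_one_add_rpow (d : ℕ) {a p c : ℝ} (ha : 0 ≤ a)
    (hp : 0 ≤ p) (hc : 0 ≤ c) :
    Integrable fun v => heatKernel d 1 v * (‖v‖ ^ a * (1 + (c * ‖v‖) ^ p)) := by
  have h (v : EuclideanSpace ℝ (Fin d)) : heatKernel d 1 v * (‖v‖ ^ a * (1 + (c * ‖v‖) ^ p)) =
      ‖v‖ ^ a * heatKernel d 1 v + c ^ p * (‖v‖ ^ (a + p) * heatKernel d 1 v) := by
    rw [mul_rpow hc (norm_nonneg v), rpow_add_of_nonneg (norm_nonneg v) ha hp]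
    ring
  simp_rw [h]
  exact (integrable_rpow_norm_mul_heatKernel d one_pos ha).add
    ((integrable_rpow_norm_mul_heatKernel d one_pos (add_nonneg ha hp)).const_mul _)

lemma sqrt_pow_mul_heatKernel_sqrt_smul (d : ℕ) {s : ℝ} (hs : 0 < s)
    (v : EuclideanSpace ℝ (Fin d)) :
    √s ^ d * heatKernel d s (√s • v) = heatKernel d 1 v := by
  have hpow : √s ^ d = s ^ ((d : ℝ) / 2) := by
    rw [← rpow_natCast, sqrt_eq_rpow, ← rpow_mul hs.le]
    ring_nf
  rw [heatKernel, heatKernel, norm_smul, mul_pow, norm_of_nonneg (sqrt_nonneg s),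
    sq_sqrt hs.le, hpow, mul_rpow (by positivity) hs.le, neg_div, rpow_neg hs.le, mul_one]
  field_simp

lemma heatSemigroup_eq_integral_heatKernel_one (d : ℕ) {s : ℝ} (hs : 0 ≤ s)
    (f : EuclideanSpace ℝ (Fin d) → ℝ) (x : EuclideanSpace ℝ (Fin d)) :
    heatSemigroup d s f x = ∫ v, heatKernel d 1 v * f (x - √s • v) := by
  rcases hs.eq_or_lt with rfl | hs
  · simp [heatSemigroup, integral_mul_const, integral_heatKernel d one_pos]
  have hsd : (0 : ℝ) < √s ^ d := by positivity
  calc heatSemigroup d s f x = ∫ v, heatKernel d s v * f (x - v) := by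
        rw [heatSemigroup, if_neg hs.ne']
        simpa using integral_sub_left_eq_self (fun v => heatKernel d s v * f (x - v)) volume x
    _ = ∫ v, √s ^ d * (heatKernel d s (√s • v) * f (x - √s • v)) := by
        rw [integral_const_mul, Measure.integral_comp_smul_of_nonneg volume
          (fun v => heatKernel d s v * f (x - v)) √s (hR := sqrt_nonneg s),
          finrank_euclideanSpace_fin, smul_eq_mul, mul_inv_cancel_left₀ hsd.ne']
    _ = ∫ v, heatKernel d 1 v * f (x - √s • v) := by
        simp_rw [← mul_assoc, sqrt_pow_mul_heatKernel_sqrt_smul d hs]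

lemma enorm_heatSemigroup_sub_le (d : ℕ) {s t : ℝ} (hs : 0 ≤ s) (ht : 0 ≤ t)
    {f : EuclideanSpace ℝ (Fin d) → ℝ} (hfm : Measurable f) {C : ℝ} (hfC : ∀ x, ‖f x‖ ≤ C)
    (x : EuclideanSpace ℝ (Fin d)) :
    ‖heatSemigroup d t f x - heatSemigroup d s f x‖ₑ ≤
      ∫⁻ v, ENNReal.ofReal (heatKernel d 1 v) * ‖f (x - √t • v) - f (x - √s • v)‖ₑ := by
  have hint (c : ℝ) : Integrable (fun v => heatKernel d 1 v * f (x - c • v)) :=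
    (integrable_heatKernel d one_pos).mul_bdd (by fun_prop : Measurable _).aestronglyMeasurable
      (.of_forall fun v => hfC _)
  rw [heatSemigroup_eq_integral_heatKernel_one d ht, heatSemigroup_eq_integral_heatKernel_one d hs,
    ← integral_sub (hint _) (hint _)]
  simp_rw [← mul_sub]
  refine (enorm_integral_le_lintegral_enorm _).trans_eq (lintegral_congr fun v => ?_)
  rw [enorm_mul, Real.enorm_of_nonneg (heatKernel_nonneg d zero_le_one v)]

lemma sqrt_mul_norm_sub_rpow_mul_add_le {E : Type*} [SeminormedAddCommGroup E]
    [NormedSpace ℝ E] {p α L T s t : ℝ} (hp : 0 ≤ p) (hα : 0 ≤ α) (hs : 0 ≤ s) (hst : s ≤ t)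
    (htT : t ≤ T) (v : E) :
    √L * ‖√t • v - √s • v‖ ^ (α / 2) * (2 ^ p * (1 + ‖√t • v‖ ^ p) + 2 ^ p * (1 + ‖√s • v‖ ^ p)) ≤
      (t - s) ^ (α / 4) * (2 * 2 ^ p * √L) * (‖v‖ ^ (α / 2) * (1 + (√T * ‖v‖) ^ p)) := by
  have hshift : ‖√t • v - √s • v‖ ^ (α / 2) ≤ (t - s) ^ (α / 4) * ‖v‖ ^ (α / 2) := by
    calc ‖√t • v - √s • v‖ ^ (α / 2) ≤ (√(t - s) * ‖v‖) ^ (α / 2) := by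
          gcongr
          exact norm_sqrt_smul_sub_sqrt_smul_le hs hst v
      _ = (t - s) ^ (α / 4) * ‖v‖ ^ (α / 2) := by
          rw [mul_rpow (sqrt_nonneg _) (norm_nonneg _), ← rpow_div_two_eq_sqrt _ (by linarith)]
          ring_nf
  have hsize {c : ℝ} (hc : 0 ≤ c) (hcT : c ≤ √T) : ‖c • v‖ ≤ √T * ‖v‖ := by
    rw [norm_smul, norm_of_nonneg hc]
    gcongr
  have hsqrt_t : √t ≤ √T := sqrt_le_sqrt htT
  calc √L * ‖√t • v - √s • v‖ ^ (α / 2) * (2 ^ p * (1 + ‖√t • v‖ ^ p) + 2 ^ p * (1 + ‖√s • v‖ ^ p))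
      ≤ √L * ((t - s) ^ (α / 4) * ‖v‖ ^ (α / 2)) *
          (2 ^ p * (1 + (√T * ‖v‖) ^ p) + 2 ^ p * (1 + (√T * ‖v‖) ^ p)) := by
        gcongr
        · exact hsize (sqrt_nonneg t) hsqrt_t
        · exact hsize (sqrt_nonneg s) ((sqrt_le_sqrt hst).trans hsqrt_t)
    _ = (t - s) ^ (α / 4) * (2 * 2 ^ p * √L) * (‖v‖ ^ (α / 2) * (1 + (√T * ‖v‖) ^ p)) := by ring

lemma lintegral_one_add_norm_rpow_mul_enorm_heatSemigroup_sub_le (d : ℕ) {p α L T s t : ℝ}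
    (hp : 0 ≤ p) (hα : 0 ≤ α) {ℓ : EuclideanSpace ℝ (Fin d) → ℝ} (hℓm : Measurable ℓ)
    (hℓnn : ∀ x, 0 ≤ ℓ x) {C : ℝ} (hℓC : ∀ x, ‖ℓ x‖ ≤ C)
    (hℓ : ∀ x y, |ℓ x - ℓ y| ≤ L * ‖x - y‖ ^ α) (hs : 0 ≤ s) (hst : s ≤ t) (htT : t ≤ T) :
    ∫⁻ x, ENNReal.ofReal (1 + ‖x‖ ^ p) * ‖heatSemigroup d t ℓ x - heatSemigroup d s ℓ x‖ₑ ≤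
      ENNReal.ofReal ((t - s) ^ (α / 4) * (2 * 2 ^ p * √L)) *
        (∫⁻ v, ENNReal.ofReal (heatKernel d 1 v * (‖v‖ ^ (α / 2) * (1 + (√T * ‖v‖) ^ p)))) *
        ∫⁻ x, ENNReal.ofReal (1 + ‖x‖ ^ p) * ENNReal.ofReal √(ℓ x) := by
  set K := ∫⁻ x, ENNReal.ofReal (1 + ‖x‖ ^ p) * ENNReal.ofReal √(ℓ x)
  set A := (t - s) ^ (α / 4) * (2 * 2 ^ p * √L)
  set k := fun v => ENNReal.ofReal (heatKernel d 1 v)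
  set m := fun v : EuclideanSpace ℝ (Fin d) => ‖v‖ ^ (α / 2) * (1 + (√T * ‖v‖) ^ p)
  set Δ := fun (x v : EuclideanSpace ℝ (Fin d)) => ‖ℓ (x - √t • v) - ℓ (x - √s • v)‖ₑ
  have hk := (continuous_heatKernel d 1).measurable
  calc ∫⁻ x, ENNReal.ofReal (1 + ‖x‖ ^ p) * ‖heatSemigroup d t ℓ x - heatSemigroup d s ℓ x‖ₑ
      ≤ ∫⁻ x, ENNReal.ofReal (1 + ‖x‖ ^ p) * ∫⁻ v, k v * Δ x v := by
        gcongr with x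
        exact enorm_heatSemigroup_sub_le d hs (hs.trans hst) hℓm hℓC x
    _ = ∫⁻ v, ∫⁻ x, ENNReal.ofReal (1 + ‖x‖ ^ p) * (k v * Δ x v) := by
        simp_rw [← lintegral_const_mul' _ _ ENNReal.ofReal_ne_top]
        exact lintegral_lintegral_swap (by fun_prop)
    _ = ∫⁻ v, k v * ∫⁻ x, ENNReal.ofReal (1 + ‖x‖ ^ p) * Δ x v := by
        simp_rw [mul_left_comm _ (k _)]
        exact lintegral_congr fun v => lintegral_const_mul' _ _ ENNReal.ofReal_ne_top
    _ ≤ ∫⁻ v, k v * (ENNReal.ofReal (√L * ‖√t • v - √s • v‖ ^ (α / 2) *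
          (2 ^ p * (1 + ‖√t • v‖ ^ p) + 2 ^ p * (1 + ‖√s • v‖ ^ p))) * K) := by
        gcongr with v
        exact lintegral_one_add_norm_rpow_mul_enorm_comp_sub_sub_le volume hp hℓm hℓnn hℓ _ _
    _ ≤ ∫⁻ v, ENNReal.ofReal A * ENNReal.ofReal (heatKernel d 1 v * m v) * K := by
        refine lintegral_mono fun v => ?_
        have hkv := heatKernel_nonneg d zero_le_one v
        rw [← mul_assoc, ← ENNReal.ofReal_mul hkv, ← ENNReal.ofReal_mul (by positivity),
          mul_left_comm A]
        gcongr ?_ * K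
        exact ENNReal.ofReal_le_ofReal (mul_le_mul_of_nonneg_left
          (sqrt_mul_norm_sub_rpow_mul_add_le hp hα hs hst htT v) hkv)
    _ = ENNReal.ofReal A * (∫⁻ v, ENNReal.ofReal (heatKernel d 1 v * m v)) * K := by
        rw [lintegral_mul_const _ (by fun_prop), lintegral_const_mul' _ _ ENNReal.ofReal_ne_top]

lemma integral_mul_abs_le_toReal_lintegral {X : Type*} [MeasurableSpace X] {μ : Measure X}
    {w : X → ℝ} (hw : ∀ x, 0 ≤ w x) (f : X → ℝ) :
    ∫ x, w x * |f x| ∂μ ≤ (∫⁻ x, ENNReal.ofReal (w x) * ‖f x‖ₑ ∂μ).toReal := by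
  refine (Real.le_norm_self _).trans ((norm_integral_le_lintegral_norm _).trans_eq ?_)
  congr 1
  refine lintegral_congr fun x => ?_
  rw [ofReal_norm, enorm_mul, Real.enorm_of_nonneg (hw x), enorm_abs]

theorem stmt_16_general (d : ℕ) (α p T : ℝ) (hα0 : 0 < α) (hp : 1 ≤ p)
    (ℓ : EuclideanSpace ℝ (Fin d) → ℝ) (hℓmeas : Measurable ℓ) (hℓnn : ∀ x, 0 ≤ ℓ x)
    (hℓbdd : ∃ B : ℝ, ∀ x, ℓ x ≤ B)
    (L : ℝ) (hℓholder : ∀ x y, |ℓ x - ℓ y| ≤ L * ‖x - y‖ ^ α)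
    (hK : Integrable (fun x : EuclideanSpace ℝ (Fin d) => (1 + ‖x‖ ^ p) * Real.sqrt (ℓ x))) :
    ∃ c : ℝ, 0 < c ∧ ∀ s t : ℝ, 0 ≤ s → s < t → t ≤ T →
      ∫ x : EuclideanSpace ℝ (Fin d),
          (1 + ‖x‖ ^ p) * |heatSemigroup d t ℓ x - heatSemigroup d s ℓ x| ≤
        c * (t - s) ^ (α / 4) := by
  obtain ⟨B, hB⟩ := hℓbdd
  have hp0 : 0 ≤ p := by linarith
  set M := ∫⁻ v, ENNReal.ofReal (heatKernel d 1 v * (‖v‖ ^ (α / 2) * (1 + (√T * ‖v‖) ^ p)))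
  set K := ∫⁻ x, ENNReal.ofReal (1 + ‖x‖ ^ p) * ENNReal.ofReal √(ℓ x)
  have hMfin : M ≠ ⊤ := (integrable_heatKernel_mul_rpow_norm_mul_one_add_rpow d (by positivity) hp0
    (sqrt_nonneg T)).lintegral_lt_top.ne
  have hKfin : K ≠ ⊤ := by
    refine (lt_of_eq_of_lt (lintegral_congr fun x => ?_) hK.lintegral_lt_top).ne
    exact (ENNReal.ofReal_mul (by positivity)).symm
  set A := 2 * 2 ^ p * √L
  refine ⟨A * (M * K).toReal + 1, by positivity, fun s t hs hst htT => ?_⟩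
  have hmain := lintegral_one_add_norm_rpow_mul_enorm_heatSemigroup_sub_le d hp0 hα0.le hℓmeas hℓnn
    (fun x => (norm_of_nonneg (hℓnn x)).trans_le (hB x)) hℓholder hs hst.le htT
  calc ∫ x, (1 + ‖x‖ ^ p) * |heatSemigroup d t ℓ x - heatSemigroup d s ℓ x|
      ≤ (∫⁻ x, ENNReal.ofReal (1 + ‖x‖ ^ p) *
          ‖heatSemigroup d t ℓ x - heatSemigroup d s ℓ x‖ₑ).toReal :=
        integral_mul_abs_le_toReal_lintegral (fun x => by positivity) _
    _ ≤ (ENNReal.ofReal ((t - s) ^ (α / 4) * A) * M * K).toReal :=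
        ENNReal.toReal_mono (by finiteness) hmain
    _ = (t - s) ^ (α / 4) * (A * (M * K).toReal) := by
        rw [mul_assoc, ENNReal.toReal_mul, ENNReal.toReal_ofReal (by positivity)]
        ring
    _ ≤ (A * (M * K).toReal + 1) * (t - s) ^ (α / 4) := by
        rw [mul_comm]
        gcongr
        linarith

theorem stmt_16 (d : ℕ) (α p T : ℝ) (hα0 : 0 < α) (hα1 : α < 1) (hp : 1 ≤ p) (hT : 0 < T)
    (ℓ : EuclideanSpace ℝ (Fin d) → ℝ) (hℓmeas : Measurable ℓ) (hℓnn : ∀ x, 0 ≤ ℓ x)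
    (hℓbdd : ∃ B : ℝ, ∀ x, ℓ x ≤ B)
    (L : ℝ) (hL : 0 ≤ L) (hℓholder : ∀ x y, |ℓ x - ℓ y| ≤ L * ‖x - y‖ ^ α)
    (hK : Integrable (fun x : EuclideanSpace ℝ (Fin d) => (1 + ‖x‖ ^ p) * Real.sqrt (ℓ x))) :
    ∃ c : ℝ, 0 < c ∧ ∀ s t : ℝ, 0 ≤ s → s < t → t ≤ T →
      ∫ x : EuclideanSpace ℝ (Fin d),
          (1 + ‖x‖ ^ p) * |heatSemigroup d t ℓ x - heatSemigroup d s ℓ x| ≤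
        c * (t - s) ^ (α / 4) :=
  stmt_16_general d α p T hα0 hp ℓ hℓmeas hℓnn hℓbdd L hℓholder hK
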